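/- arXiv:2210.12497 — 7 statements merged into one kernel-verified Lean document; each statement's English description precedes it below -/
import Mathlib

section
/- For any N×N real matrices setup with W = W_N W_{N-1} ⋯ W_1 and the gradient flow dW_j/dt = -W_{j+1}^T ⋯ W_N^T (∂_W E(W)) W_1^T ⋯ W_{j-1}^T, the quantities G_j = W_{j+1}^T W_{j+1} - W_j W_j^T are constant along trajectories, i.e., dG_j/dt = 0 for each j = 1, ..., N-1. -/
open Matrix
attribute [local instance] Matrix.normedAddCommGroup Matrix.normedSpace

lemma hasDerivAt_matrix {d : ℕ} {f : ℝ → Matrix (Fin d) (Fin d) ℝ} {f' : Matrix (Fin d) (Fin d) ℝ} {t : ℝ} :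
    HasDerivAt f f' t ↔ ∀ i k, HasDerivAt (fun s => f s i k) (f' i k) t := by
  exact hasDerivAt_pi.trans (forall_congr' fun i => hasDerivAt_pi)

lemma HasDerivAt.matmul {d : ℕ} {f g : ℝ → Matrix (Fin d) (Fin d) ℝ}
    {f' g' : Matrix (Fin d) (Fin d) ℝ} {t : ℝ}
    (hf : HasDerivAt f f' t) (hg : HasDerivAt g g' t) :
    HasDerivAt (fun s => f s * g s) (f' * g t + f t * g') t := by
  rw [hasDerivAt_matrix] at *
  intro i k
  simp only [Matrix.mul_apply, Matrix.add_apply]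
  rw [← Finset.sum_add_distrib]
  exact HasDerivAt.fun_sum fun m _ => (hf i m).mul (hg m k)

lemma HasDerivAt.mtranspose {d : ℕ} {f : ℝ → Matrix (Fin d) (Fin d) ℝ}
    {f' : Matrix (Fin d) (Fin d) ℝ} {t : ℝ} (hf : HasDerivAt f f' t) :
    HasDerivAt (fun s => (f s)ᵀ) f'ᵀ t := by
  rw [hasDerivAt_matrix] at *
  intro i k
  exact hf k i

/-- Along the gradient flow
`dW_j/dt = -W_{j+1}ᵀ ⋯ W_Nᵀ (∂_W E(W)) W_1ᵀ ⋯ W_{j-1}ᵀ`,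
the quantities `G_j = W_{j+1}ᵀ W_{j+1} - W_j W_jᵀ` are constant
(their time derivative vanishes). -/
theorem dln_balance_invariant (d N : ℕ) (t : ℝ)
    (W : ℕ → ℝ → Matrix (Fin d) (Fin d) ℝ)
    (gradE : ℝ → Matrix (Fin d) (Fin d) ℝ)
    (hW : ∀ j, 1 ≤ j → j ≤ N →
      HasDerivAt (W j)
        (-(((List.range (N - j)).map (fun k => (W (j + 1 + k) t)ᵀ)).prod *
            gradE t *
            ((List.range (j - 1)).map (fun k => (W (1 + k) t)ᵀ)).prod)) t) :
    ∀ j, 1 ≤ j → j ≤ N - 1 →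
      HasDerivAt (fun s => (W (j + 1) s)ᵀ * W (j + 1) s - W j s * (W j s)ᵀ)
        (0 : Matrix (Fin d) (Fin d) ℝ) t := by
  intro j hj1 hj2
  have hjN : j + 1 ≤ N := by omega
  set P : Matrix (Fin d) (Fin d) ℝ :=
    ((List.range (N - (j + 1))).map (fun k => (W (j + 1 + 1 + k) t)ᵀ)).prod with hP
  set Q : Matrix (Fin d) (Fin d) ℝ :=
    ((List.range (j - 1)).map (fun k => (W (1 + k) t)ᵀ)).prod with hQ
  set A := W (j + 1) t with hA
  set B := W j t with hB
  set G := gradE t with hG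
  have hPj : ((List.range (N - j)).map (fun k => (W (j + 1 + k) t)ᵀ)).prod = Aᵀ * P := by
    rw [show N - j = (N - (j + 1)) + 1 from by omega, List.range_succ_eq_map,
      List.map_cons, List.map_map, List.prod_cons]
    have heq : List.map ((fun k => (W (j + 1 + k) t)ᵀ) ∘ Nat.succ) (List.range (N - (j + 1)))
        = List.map (fun k => (W (j + 1 + 1 + k) t)ᵀ) (List.range (N - (j + 1))) :=
      List.map_congr_left fun k _ => by
        simp only [Function.comp_apply]
        rw [show j + 1 + Nat.succ k = j + 1 + 1 + k from by omega]
    rw [heq]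
  have hQj1 : ((List.range (j + 1 - 1)).map (fun k => (W (1 + k) t)ᵀ)).prod = Q * Bᵀ := by
    rw [show j + 1 - 1 = (j - 1) + 1 from by omega, List.range_succ, List.map_append,
      List.prod_append, List.map_singleton, List.prod_singleton,
      show 1 + (j - 1) = j from by omega]
  have hDj := hW j hj1 (by omega)
  have hDj1 := hW (j + 1) (by omega) hjN
  rw [hPj] at hDj
  rw [hQj1] at hDj1
  have h1 := hDj1.mtranspose.matmul hDj1
  have h2 := hDj.matmul hDj.mtranspose
  have h := h1.sub h2
  refine h.congr_deriv ?_
  simp only [Matrix.transpose_neg, Matrix.transpose_mul, Matrix.transpose_transpose]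
  noncomm_ring
end

section
/- If all weight matrices are equal on the balanced manifold, then the singular values of each W_j are equal to the N-th roots of the corresponding singular values of the product W = W_N ⋯ W_1; more precisely, if W_{j+1}^T W_{j+1} = W_j W_j^T for all j, then W W^T = (W_N W_N^T)^N. -/
open Matrix

lemma dln_key {d : ℕ} (A : Matrix (Fin d) (Fin d) ℝ) (j : ℕ) :
    A * (Aᵀ * A) ^ j * Aᵀ = (A * Aᵀ) ^ (j + 1) := by
  induction j with
  | zero => simp
  | succ j ih =>
      rw [pow_succ, pow_succ]
      calc A * ((Aᵀ * A) ^ j * (Aᵀ * A)) * Aᵀ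
          = (A * (Aᵀ * A) ^ j * Aᵀ) * (A * Aᵀ) := by
            simp only [Matrix.mul_assoc]
        _ = (A * Aᵀ) ^ (j + 1) * (A * Aᵀ) := by rw [ih]

lemma dln_prefix {d : ℕ} (W : ℕ → Matrix (Fin d) (Fin d) ℝ) (N : ℕ)
    (hbal : ∀ j, 1 ≤ j → j ≤ N - 1 → (W (j + 1))ᵀ * W (j + 1) = W j * (W j)ᵀ) :
    ∀ m, m ≤ N →
      (((List.range m).map (fun k => W (m - k))).prod) *
        (((List.range m).map (fun k => W (m - k))).prod)ᵀ
        = (W m * (W m)ᵀ) ^ m := by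
  intro m
  induction m with
  | zero => simp
  | succ m ih =>
      intro hm
      have hstep : ((List.range (m + 1)).map (fun k => W (m + 1 - k))).prod
          = W (m + 1) * ((List.range m).map (fun k => W (m - k))).prod := by
        rw [List.range_succ_eq_map]
        simp [Function.comp_def, Nat.succ_sub_succ]
      rw [hstep]
      rcases Nat.eq_zero_or_pos m with hm0 | hm1
      · subst hm0; simp
      · have h1 : (((List.range m).map (fun k => W (m - k))).prod) *
            (((List.range m).map (fun k => W (m - k))).prod)ᵀ
            = (W m * (W m)ᵀ) ^ m := ih (le_of_lt hm)
        have hb : (W (m + 1))ᵀ * W (m + 1) = W m * (W m)ᵀ :=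
          hbal m hm1 (by omega)
        rw [Matrix.transpose_mul, Matrix.mul_assoc, ← Matrix.mul_assoc
          (((List.range m).map (fun k => W (m - k))).prod), h1, ← hb,
          ← Matrix.mul_assoc]
        exact dln_key (W (m + 1)) m

/-- on the balanced manifold (`W_{j+1}ᵀ W_{j+1} = W_j W_jᵀ` for all
`j = 1, …, N-1`), the end-to-end matrix `W = W_N ⋯ W_1` satisfies
`W Wᵀ = (W_N W_Nᵀ)^N`. -/
theorem dln_balanced_singular_values (d N : ℕ) (hN : 1 ≤ N)
    (W : ℕ → Matrix (Fin d) (Fin d) ℝ)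
    (hinv : ∀ j, 1 ≤ j → j ≤ N → IsUnit (W j))
    (hbal : ∀ j, 1 ≤ j → j ≤ N - 1 → (W (j + 1))ᵀ * W (j + 1) = W j * (W j)ᵀ) :
    (((List.range N).map (fun k => W (N - k))).prod) *
      (((List.range N).map (fun k => W (N - k))).prod)ᵀ
      = (W N * (W N)ᵀ) ^ N := by
  exact dln_prefix W N hbal N le_rfl
end

section
/- Let W = U Σ V^T be a singular value decomposition of W ∈ GL(d, ℝ) with singular values σ_1 ≥ ... ≥ σ_d > 0. Then for each pair (i, l), the matrix T_{il} = U E_{il} V^T (where E_{il} is the standard basis matrix) is an eigenvector of the linear map A_{N,W}(Z) = (1/N) Σ_{j=1}^N (W W^T)^{(N-j)/N} Z (W^T W)^{(j-1)/N} with eigenvalue λ_{il}^N = (1/N) Σ_{j=1}^N σ_i^{2(N-j)/N} σ_l^{2(j-1)/N}. -/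
open Matrix

lemma diag_stdBasis_diag {d : ℕ} (f g : Fin d → ℝ) (i l : Fin d) (c : ℝ) :
    Matrix.diagonal f * Matrix.single i l c * Matrix.diagonal g
      = (f i * g l) • Matrix.single i l c := by
  ext a b
  simp only [Matrix.mul_apply, Matrix.single, Matrix.diagonal, Matrix.of_apply,
    Matrix.smul_apply, smul_eq_mul, ite_and, mul_ite, ite_mul, zero_mul, mul_zero,
    Finset.sum_ite_eq, Finset.sum_ite_eq', Finset.mem_univ, if_true]
  split_ifs <;> simp_all <;> ring

lemma sandwich {d : ℕ} (U V D D' : Matrix (Fin d) (Fin d) ℝ)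
    (hU1 : Uᵀ * U = 1) (hV1 : Vᵀ * V = 1) (E : Matrix (Fin d) (Fin d) ℝ) :
    (U * D * Uᵀ) * (U * E * Vᵀ) * (V * D' * Vᵀ) = U * (D * E * D') * Vᵀ := by
  calc (U * D * Uᵀ) * (U * E * Vᵀ) * (V * D' * Vᵀ)
      = U * D * ((Uᵀ * U) * (E * ((Vᵀ * V) * (D' * Vᵀ)))) := by
        simp only [Matrix.mul_assoc]
    _ = _ := by rw [hU1, hV1]; simp only [Matrix.one_mul, Matrix.mul_assoc]

/-- for `W = U Σ Vᵀ` with `U, V` orthogonal and positive singular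
values `σ`, the matrix `T_{il} = U E_{il} Vᵀ` is an eigenvector of
`A_{N,W}(Z) = (1/N) ∑_{j=1}^N (W Wᵀ)^{(N-j)/N} Z (Wᵀ W)^{(j-1)/N}` with eigenvalue
`λ_{il}^N = (1/N) ∑_{j=1}^N σ_i^{2(N-j)/N} σ_l^{2(j-1)/N}`.
Here the real powers `(W Wᵀ)^t = U Σ^{2t} Uᵀ` and `(Wᵀ W)^t = V Σ^{2t} Vᵀ` are
defined via the spectral decomposition. -/
theorem dln_operator_eigenvectors (d N : ℕ) (hN : 1 ≤ N)
    (U V : Matrix (Fin d) (Fin d) ℝ) (σ : Fin d → ℝ) (hσ : ∀ a, 0 < σ a)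
    (hU1 : Uᵀ * U = 1) (hU2 : U * Uᵀ = 1)
    (hV1 : Vᵀ * V = 1) (hV2 : V * Vᵀ = 1)
    (i l : Fin d) :
    (N : ℝ)⁻¹ • (∑ j ∈ Finset.Icc 1 N,
        (U * Matrix.diagonal (fun a => (σ a ^ 2) ^ ((((N : ℝ) - (j : ℝ)) / N))) * Uᵀ) *
          (U * Matrix.single i l (1 : ℝ) * Vᵀ) *
          (V * Matrix.diagonal (fun a => (σ a ^ 2) ^ ((((j : ℝ) - 1) / N))) * Vᵀ))
      = ((N : ℝ)⁻¹ * ∑ j ∈ Finset.Icc 1 N,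
            (σ i ^ 2) ^ (((N : ℝ) - (j : ℝ)) / N) * (σ l ^ 2) ^ (((j : ℝ) - 1) / N)) •
          (U * Matrix.single i l (1 : ℝ) * Vᵀ) := by
  have key : ∀ j ∈ Finset.Icc 1 N,
      (U * Matrix.diagonal (fun a => (σ a ^ 2) ^ ((((N : ℝ) - (j : ℝ)) / N))) * Uᵀ) *
        (U * Matrix.single i l (1 : ℝ) * Vᵀ) *
        (V * Matrix.diagonal (fun a => (σ a ^ 2) ^ ((((j : ℝ) - 1) / N))) * Vᵀ)
      = ((σ i ^ 2) ^ (((N : ℝ) - (j : ℝ)) / N) * (σ l ^ 2) ^ (((j : ℝ) - 1) / N)) •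
          (U * Matrix.single i l (1 : ℝ) * Vᵀ) := by
    intro j _
    rw [sandwich _ _ _ _ hU1 hV1, diag_stdBasis_diag]
    simp only [Matrix.mul_smul, Matrix.smul_mul]
  rw [Finset.sum_congr rfl key, ← Finset.sum_smul, smul_smul]
end

section
/- The determinant of the DLN metric g^N at a point with singular values σ_1, ..., σ_d > 0 satisfies √(det g^N) = N^{d(d-1)/2} · (∏_i σ_i^2)^{(1-N)/(2N)} · van(Σ^{2/N}) / van(Σ^2), where van(Λ) = ∏_{i<j}(λ_i - λ_j) denotes the Vandermonde determinant of the diagonal entries. Equivalently, ∏_{i,l} (λ_{il}^N)^{-1} = N^{d(d-1)} (∏_i σ_i^2)^{(1-N)/N} (van(Σ^{2/N})/van(Σ^2))^2. -/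
open Finset

lemma dln_aux (d N : ℕ) (hN : 1 ≤ N) (a b : Fin d → ℝ)
    (hbpos : ∀ i, 0 < b i) (hbN : ∀ i, b i ^ N = a i)
    (hbne : ∀ i l : Fin d, i ≠ l → b i ≠ b l) :
    (∏ i : Fin d, ∏ l : Fin d,
        ((N : ℝ)⁻¹ * ∑ k ∈ Finset.range N, b l ^ k * b i ^ (N - 1 - k))⁻¹)
      = (N : ℝ) ^ (d * (d - 1)) * ((∏ i : Fin d, b i) ^ (N - 1))⁻¹ *
          ((∏ i : Fin d, ∏ j ∈ Finset.Ioi i, (b i - b j)) /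
            (∏ i : Fin d, ∏ j ∈ Finset.Ioi i, (a i - a j))) ^ 2 := by
  have hN0 : (N : ℝ) ≠ 0 := by positivity
  set T : Fin d → Fin d → ℝ := fun i l => ∑ k ∈ Finset.range N, b l ^ k * b i ^ (N - 1 - k)
    with hT
  have hTdiag : ∀ i, T i i = (N : ℝ) * b i ^ (N - 1) := by
    intro i
    have : ∀ k ∈ Finset.range N, b i ^ k * b i ^ (N - 1 - k) = b i ^ (N - 1) := by
      intro k hk
      rw [← pow_add]
      congr 1
      simp only [Finset.mem_range] at hk
      omega
    calc T i i = ∑ k ∈ Finset.range N, b i ^ k * b i ^ (N - 1 - k) := rfl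
    _ = (N : ℝ) * b i ^ (N - 1) := by
        rw [Finset.sum_congr rfl this, Finset.sum_const, Finset.card_range, nsmul_eq_mul]
  have hToff : ∀ i l : Fin d, i ≠ l → T i l = (a l - a i) / (b l - b i) := by
    intro i l h
    have hne : b l - b i ≠ 0 := sub_ne_zero.2 (hbne l i (Ne.symm h))
    rw [eq_div_iff hne, hT]
    simpa [hbN] using geom_sum₂_mul (b l) (b i) N
  -- step: pull out N
  have step1 : (∏ i : Fin d, ∏ l : Fin d, ((N : ℝ)⁻¹ * T i l)⁻¹)
      = (N : ℝ) ^ (d * d) * ∏ i : Fin d, ∏ l : Fin d, (T i l)⁻¹ := by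
    simp only [mul_inv, inv_inv, Finset.prod_mul_distrib, Finset.prod_const,
      Finset.card_univ, Fintype.card_fin, ← pow_mul]
  -- split diagonal and off diagonal
  have step2 : ∀ i : Fin d, (∏ l : Fin d, (T i l)⁻¹)
      = (T i i)⁻¹ * ∏ l ∈ Finset.univ.erase i, (T i l)⁻¹ := by
    intro i
    rw [Finset.mul_prod_erase Finset.univ (fun l => (T i l)⁻¹) (Finset.mem_univ i)]
  have step3 : (∏ i : Fin d, ∏ l ∈ Finset.univ.erase i, (T i l)⁻¹)
      = ∏ i : Fin d, ∏ j ∈ Finset.Ioi i, ((T i j)⁻¹ * (T j i)⁻¹) := by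
    have h := (Finset.prod_prod_Ioi_mul_eq_prod_prod_off_diag
      (fun j i : Fin d => (T i j)⁻¹)).symm
    simp only [Finset.compl_singleton] at h
    convert h using 3
  have step4 : (∏ i : Fin d, ∏ j ∈ Finset.Ioi i, ((T i j)⁻¹ * (T j i)⁻¹))
      = ((∏ i : Fin d, ∏ j ∈ Finset.Ioi i, (b i - b j)) /
          (∏ i : Fin d, ∏ j ∈ Finset.Ioi i, (a i - a j))) ^ 2 := by
    rw [div_pow, ← Finset.prod_pow, ← Finset.prod_pow, ← Finset.prod_div_distrib]
    refine Finset.prod_congr rfl fun i _ => ?_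
    rw [← Finset.prod_pow, ← Finset.prod_pow, ← Finset.prod_div_distrib]
    refine Finset.prod_congr rfl fun j hj => ?_
    have hij : i ≠ j := (Finset.mem_Ioi.1 hj).ne
    rw [hToff i j hij, hToff j i hij.symm, inv_div, inv_div, div_mul_div_comm,
      show (b j - b i) * (b i - b j) = -((b i - b j) ^ 2) by ring,
      show (a j - a i) * (a i - a j) = -((a i - a j) ^ 2) by ring, neg_div_neg_eq]
  have step5 : (∏ i : Fin d, (T i i)⁻¹)
      = ((N : ℝ) ^ d)⁻¹ * ((∏ i : Fin d, b i) ^ (N - 1))⁻¹ := by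
    simp only [hTdiag, mul_inv, Finset.prod_mul_distrib, Finset.prod_const,
      Finset.card_univ, Fintype.card_fin, Finset.prod_inv_distrib, Finset.prod_pow, inv_pow]
  calc (∏ i : Fin d, ∏ l : Fin d, ((N : ℝ)⁻¹ * T i l)⁻¹)
      = (N : ℝ) ^ (d * d) * ((∏ i : Fin d, (T i i)⁻¹) *
          ∏ i : Fin d, ∏ l ∈ Finset.univ.erase i, (T i l)⁻¹) := by
        rw [step1]
        congr 1
        rw [Finset.prod_congr rfl fun i _ => step2 i, Finset.prod_mul_distrib]
    _ = (N : ℝ) ^ (d * d) * (((N : ℝ) ^ d)⁻¹ * ((∏ i : Fin d, b i) ^ (N - 1))⁻¹ *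
          ((∏ i : Fin d, ∏ j ∈ Finset.Ioi i, (b i - b j)) /
            (∏ i : Fin d, ∏ j ∈ Finset.Ioi i, (a i - a j))) ^ 2) := by
        rw [step5, step3, step4]
    _ = (N : ℝ) ^ (d * (d - 1)) * ((∏ i : Fin d, b i) ^ (N - 1))⁻¹ *
          ((∏ i : Fin d, ∏ j ∈ Finset.Ioi i, (b i - b j)) /
            (∏ i : Fin d, ∏ j ∈ Finset.Ioi i, (a i - a j))) ^ 2 := by
        have hd : d * (d - 1) = d * d - d := by
          cases d with
          | zero => simp
          | succ k => rw [Nat.succ_sub_one, Nat.mul_succ, Nat.add_sub_cancel]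
        have hdd : d ≤ d * d := by
          cases d with
          | zero => simp
          | succ k => exact Nat.le_mul_of_pos_left _ (Nat.succ_pos k)
        rw [hd, pow_sub₀ _ hN0 hdd]
        ring

/-- determinant of the depth-`N` DLN metric. With
`λ_{il}^N = (1/N) ∑_{j=1}^N (σ_i²)^{(N-j)/N} (σ_l²)^{(j-1)/N}` and the
Vandermonde products `van(Σ^{2/N}) = ∏_{i<j} (σ_i^{2/N} - σ_j^{2/N})`,
`van(Σ²) = ∏_{i<j} (σ_i² - σ_j²)`, one has
`det g^N = ∏_{i,l} (λ_{il}^N)⁻¹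
  = N^{d(d-1)} (∏_i σ_i²)^{(1-N)/N} (van(Σ^{2/N}) / van(Σ²))²`. -/
theorem dln_metric_determinant (d N : ℕ) (hN : 1 ≤ N) (σ : Fin d → ℝ)
    (hpos : ∀ i, 0 < σ i) (hstrict : StrictAnti σ) :
    (∏ i : Fin d, ∏ l : Fin d,
        ((N : ℝ)⁻¹ * ∑ j ∈ Finset.Icc 1 N,
            (σ i ^ 2) ^ (((N : ℝ) - (j : ℝ)) / N) *
              (σ l ^ 2) ^ (((j : ℝ) - 1) / N))⁻¹)
      = (N : ℝ) ^ (d * (d - 1)) * (∏ i : Fin d, σ i ^ 2) ^ (((1 : ℝ) - N) / N) *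
          ((∏ i : Fin d, ∏ j ∈ Finset.Ioi i,
              (σ i ^ ((2 : ℝ) / N) - σ j ^ ((2 : ℝ) / N))) /
            (∏ i : Fin d, ∏ j ∈ Finset.Ioi i, (σ i ^ 2 - σ j ^ 2))) ^ 2 := by
  have hN0 : (N : ℝ) ≠ 0 := Nat.cast_ne_zero.2 (by omega)
  have key : ∀ (m : ℕ) (x : ℝ), 0 < x →
      (x ^ 2) ^ ((m : ℝ) / N) = (x ^ ((2 : ℝ) / N)) ^ m := by
    intro m x hx
    have h1 : (x ^ 2 : ℝ) = x ^ (2 : ℝ) := by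
      rw [← Real.rpow_natCast x 2]; norm_num
    rw [h1, ← Real.rpow_natCast (x ^ ((2 : ℝ) / N)) m, ← Real.rpow_mul hx.le,
      ← Real.rpow_mul hx.le]
    congr 1
    ring
  have hbanti : StrictAnti (fun i => σ i ^ ((2 : ℝ) / N)) := by
    intro i l hil
    exact Real.rpow_lt_rpow (hpos l).le (hstrict hil) (by positivity)
  have hbne : ∀ i l : Fin d, i ≠ l →
      σ i ^ ((2 : ℝ) / N) ≠ σ l ^ ((2 : ℝ) / N) := fun i l h =>
    fun e => h (hbanti.injective e)
  have hbN : ∀ i : Fin d, (σ i ^ ((2 : ℝ) / N)) ^ N = σ i ^ 2 := by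
    intro i
    rw [← Real.rpow_natCast (σ i ^ ((2 : ℝ) / N)) N, ← Real.rpow_mul (hpos i).le,
      div_mul_cancel₀ _ hN0, ← Real.rpow_natCast (σ i) 2]
    norm_num
  have hsum : ∀ i l : Fin d,
      (∑ j ∈ Finset.Icc 1 N, (σ i ^ 2) ^ (((N : ℝ) - (j : ℝ)) / N) *
          (σ l ^ 2) ^ (((j : ℝ) - 1) / N))
        = ∑ k ∈ Finset.range N,
            (σ l ^ ((2 : ℝ) / N)) ^ k * (σ i ^ ((2 : ℝ) / N)) ^ (N - 1 - k) := by
    intro i l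
    rw [← Finset.Ico_add_one_right_eq_Icc, Finset.sum_Ico_eq_sum_range]
    refine Finset.sum_congr rfl fun k hk => ?_
    have hkN : k < N := Finset.mem_range.1 hk
    have e1 : ((N : ℝ) - ((1 + k : ℕ) : ℝ)) / N = ((N - 1 - k : ℕ) : ℝ) / N := by
      congr 1
      push_cast [Nat.cast_sub (by omega : 1 + k ≤ N)]
      have : (N : ℝ) - 1 - k = (N : ℝ) - (1 + k) := by ring
      rw [show ((N - 1 - k : ℕ) : ℝ) = (N : ℝ) - 1 - k by
        push_cast [Nat.cast_sub (by omega : 1 ≤ N), Nat.cast_sub (by omega : k ≤ N - 1)]; ring]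
      ring
    have e2 : (((1 + k : ℕ) : ℝ) - 1) / N = ((k : ℕ) : ℝ) / N := by push_cast; ring_nf
    rw [e1, e2, key (N - 1 - k) (σ i) (hpos i), key k (σ l) (hpos l), mul_comm]
  have main := dln_aux d N hN (fun i => σ i ^ 2) (fun i => σ i ^ ((2 : ℝ) / N))
    (fun i => Real.rpow_pos_of_pos (hpos i) _) hbN hbne
  have tail : ((∏ i : Fin d, σ i ^ ((2 : ℝ) / N)) ^ (N - 1))⁻¹
      = (∏ i : Fin d, σ i ^ 2) ^ (((1 : ℝ) - N) / N) := by
    have hs : 0 < ∏ i : Fin d, σ i := Finset.prod_pos fun i _ => hpos i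
    have h1 : (∏ i : Fin d, σ i ^ ((2 : ℝ) / N)) = (∏ i : Fin d, σ i) ^ ((2 : ℝ) / N) :=
      Real.finset_prod_rpow _ _ (fun i _ => (hpos i).le) _
    have h2 : (∏ i : Fin d, σ i ^ 2) = (∏ i : Fin d, σ i) ^ (2 : ℝ) := by
      rw [Finset.prod_pow, ← Real.rpow_natCast (∏ i : Fin d, σ i) 2]
      norm_num
    rw [h1, h2, ← Real.rpow_natCast ((∏ i : Fin d, σ i) ^ ((2 : ℝ) / N)) (N - 1),
      ← Real.rpow_mul hs.le, ← Real.rpow_neg hs.le, ← Real.rpow_mul hs.le]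
    congr 1
    rw [Nat.cast_sub hN]
    push_cast
    field_simp
    ring
  calc (∏ i : Fin d, ∏ l : Fin d,
        ((N : ℝ)⁻¹ * ∑ j ∈ Finset.Icc 1 N,
            (σ i ^ 2) ^ (((N : ℝ) - (j : ℝ)) / N) *
              (σ l ^ 2) ^ (((j : ℝ) - 1) / N))⁻¹)
      = (∏ i : Fin d, ∏ l : Fin d,
          ((N : ℝ)⁻¹ * ∑ k ∈ Finset.range N,
              (σ l ^ ((2 : ℝ) / N)) ^ k * (σ i ^ ((2 : ℝ) / N)) ^ (N - 1 - k))⁻¹) := by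
        refine Finset.prod_congr rfl fun i _ => Finset.prod_congr rfl fun l _ => ?_
        rw [hsum i l]
    _ = (N : ℝ) ^ (d * (d - 1)) * ((∏ i : Fin d, σ i ^ ((2 : ℝ) / N)) ^ (N - 1))⁻¹ *
          ((∏ i : Fin d, ∏ j ∈ Finset.Ioi i,
              (σ i ^ ((2 : ℝ) / N) - σ j ^ ((2 : ℝ) / N))) /
            (∏ i : Fin d, ∏ j ∈ Finset.Ioi i, (σ i ^ 2 - σ j ^ 2))) ^ 2 := main
    _ = _ := by rw [tail]
end

section
/- The determinant of the infinite-depth DLN metric g^∞ at a point with distinct singular values σ_1 > ... > σ_d > 0 satisfies √(det g^∞) = van(log Σ^2) / (√(∏_i σ_i^2) · van(Σ^2)), i.e., ∏_{i,l=1}^d (λ_{il}^∞)^{-1} = (∏_i σ_i^2)^{-1} · ∏_{i<j} ((log σ_i^2 - log σ_j^2)/(σ_i^2 - σ_j^2))^2, where λ_{il}^∞ = (σ_i^2 - σ_l^2)/(log σ_i^2 - log σ_l^2) for i ≠ l and λ_{ii}^∞ = σ_i^2. -/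
/-- determinant of the infinite-depth DLN metric. With
`λ_{il}^∞ = (σ_i² - σ_l²)/(log σ_i² - log σ_l²)` for `i ≠ l` and
`λ_{ii}^∞ = σ_i²`, one has
`det g^∞ = ∏_{i,l} (λ_{il}^∞)⁻¹
  = (∏_i σ_i²)⁻¹ ∏_{i<j} ((log σ_i² - log σ_j²)/(σ_i² - σ_j²))²`. -/
theorem dln_infinite_metric_determinant (d : ℕ) (σ : Fin d → ℝ)
    (hpos : ∀ i, 0 < σ i) (hstrict : StrictAnti σ) :
    (∏ i : Fin d, ∏ l : Fin d,
        (if i = l then σ i ^ 2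
         else (σ i ^ 2 - σ l ^ 2) / (Real.log (σ i ^ 2) - Real.log (σ l ^ 2)))⁻¹)
      = (∏ i : Fin d, σ i ^ 2)⁻¹ *
          ∏ i : Fin d, ∏ j ∈ Finset.Ioi i,
            ((Real.log (σ i ^ 2) - Real.log (σ j ^ 2)) / (σ i ^ 2 - σ j ^ 2)) ^ 2 := by
  set g : Fin d → Fin d → ℝ := fun i l =>
    if i = l then (σ i ^ 2)⁻¹
    else (Real.log (σ i ^ 2) - Real.log (σ l ^ 2)) / (σ i ^ 2 - σ l ^ 2) with hg
  have key : ∀ i l : Fin d,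
      (if i = l then σ i ^ 2
        else (σ i ^ 2 - σ l ^ 2) / (Real.log (σ i ^ 2) - Real.log (σ l ^ 2)))⁻¹
      = g i l := by
    intro i l
    by_cases h : i = l <;> simp [hg, h, inv_div]
  have gsymm : ∀ i l : Fin d, g l i = g i l := by
    intro i l
    by_cases h : i = l
    · simp [h]
    · simp only [hg, if_neg h, if_neg (Ne.symm h)]
      rw [← neg_div_neg_eq]
      ring_nf
  simp_rw [key]
  have step1 : (∏ i : Fin d, ∏ l : Fin d, g i l)
      = (∏ i : Fin d, g i i) * ∏ i : Fin d, ∏ l ∈ ({i}ᶜ : Finset (Fin d)), g i l := by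
    rw [← Finset.prod_mul_distrib]
    exact Finset.prod_congr rfl fun i _ => Fintype.prod_eq_mul_prod_compl i (g i)
  rw [step1]
  congr 1
  · rw [← Finset.prod_inv_distrib]
    exact Finset.prod_congr rfl fun i _ => by simp [hg]
  · have h2 := Finset.prod_prod_Ioi_mul_eq_prod_prod_off_diag (M := ℝ) (fun j i => g i j)
    beta_reduce at h2
    have h3 : (∏ i : Fin d, ∏ l ∈ ({i}ᶜ : Finset (Fin d)), g i l)
        = ∏ i : Fin d, ∏ j ∈ Finset.Ioi i, g i j * g j i :=
      Eq.trans (by congr!) h2.symm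
    rw [h3]
    refine Finset.prod_congr rfl fun i _ => Finset.prod_congr rfl fun j hj => ?_
    have hij : i ≠ j := ne_of_lt (Finset.mem_Ioi.mp hj)
    rw [gsymm i j, ← sq]
    simp [hg, hij]
end

section
/- The Jacobian determinant of the singular value decomposition map W ↦ (U, Σ, V) at a matrix W with distinct positive singular values equals the Vandermonde determinant van(Σ^2) = ∏_{i<j}(σ_i^2 - σ_j^2). Equivalently, the linear map L : (A^U, A^V, D) ↦ A^U Σ + D + Σ A^V, from pairs of d×d skew-symmetric matrices and a diagonal matrix to d×d matrices, has |det L| = ∏_{i<j}(σ_i^2 - σ_j^2). -/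
open Matrix

namespace SVDJac

variable (d : ℕ)

abbrev S := {p : Fin d × Fin d // p.1 < p.2}

def h₁ : (Fin 2 × S d) ⊕ Fin d ≃ Fin d × Fin d where
  toFun t := match t with
    | .inl (b, s) => if b = 0 then s.1 else (s.1.2, s.1.1)
    | .inr k => (k, k)
  invFun p :=
    if h : p.1 < p.2 then .inl (0, ⟨p, h⟩)
    else if h' : p.2 < p.1 then .inl (1, ⟨(p.2, p.1), h'⟩)
    else .inr p.1
  left_inv := by
    rintro (⟨b, ⟨⟨p, q⟩, h⟩⟩ | k)
    · fin_cases b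
      · simp [h]
      · simp [h, lt_asymm h]
    · simp
  right_inv := by
    rintro ⟨i, j⟩
    rcases lt_trichotomy i j with h | h | h
    · simp [h]
    · subst h; simp
    · simp [h, lt_asymm h]

def h₂ : (Fin 2 × S d) ⊕ Fin d ≃ S d ⊕ S d ⊕ Fin d where
  toFun t := match t with
    | .inl (b, s) => if b = 0 then .inl s else .inr (.inl s)
    | .inr k => .inr (.inr k)
  invFun c := match c with
    | .inl s => .inl (0, s)
    | .inr (.inl s) => .inl (1, s)
    | .inr (.inr k) => .inr k
  left_inv := by
    rintro (⟨b, s⟩ | k)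
    · fin_cases b <;> simp
    · simp
  right_inv := by rintro (s | s | k) <;> simp

def M (σ : Fin d → ℝ) : Matrix (Fin d × Fin d) (S d ⊕ S d ⊕ Fin d) ℝ :=
  Matrix.of fun ij c => match c with
    | .inl p => ((single p.1.1 p.1.2 (1:ℝ) - single p.1.2 p.1.1 1) * diagonal σ :
        Matrix (Fin d) (Fin d) ℝ) ij.1 ij.2
    | .inr (.inl p) => (diagonal σ * (single p.1.1 p.1.2 (1:ℝ) - single p.1.2 p.1.1 1) :
        Matrix (Fin d) (Fin d) ℝ) ij.1 ij.2
    | .inr (.inr k) => (single k k (1:ℝ) : Matrix (Fin d) (Fin d) ℝ) ij.1 ij.2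

def B (σ : Fin d → ℝ) (s : S d) : Matrix (Fin 2) (Fin 2) ℝ :=
  !![σ s.1.2, σ s.1.1; -σ s.1.1, -σ s.1.2]

lemma std_apply (a b i j : Fin d) : single a b (1:ℝ) i j = if a = i ∧ b = j then 1 else 0 := by
  simp [single]

set_option maxHeartbeats 1600000 in
lemma key (σ : Fin d → ℝ) :
    (M d σ).submatrix (h₁ d) (h₂ d) = fromBlocks (blockDiagonal (B d σ)) 0 0 1 := by
  ext r c
  rcases r with ⟨b, ⟨⟨p, q⟩, hpq⟩⟩ | k <;> rcases c with ⟨b', ⟨⟨p', q'⟩, hpq'⟩⟩ | k'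
  · dsimp only at hpq hpq'
    fin_cases b <;> fin_cases b' <;>
      simp [submatrix_apply, h₁, h₂, M,
        mul_diagonal, diagonal_mul, Matrix.sub_apply, std_apply, fromBlocks_apply₁₁,
        blockDiagonal_apply, B, Subtype.mk.injEq, Prod.mk.injEq] <;>
      rcases eq_or_ne p' p with rfl | h1 <;> rcases eq_or_ne q' q with rfl | h2 <;>
      split_ifs <;> first | ring1 | (exfalso; omega) | norm_num
  · dsimp only at hpq
    fin_cases b <;>
      simp [submatrix_apply, h₁, h₂, M, std_apply, fromBlocks_apply₁₂] <;>
      omega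
  · dsimp only at hpq'
    fin_cases b' <;>
      simp [submatrix_apply, h₁, h₂, M,
        mul_diagonal, diagonal_mul, Matrix.sub_apply, std_apply, fromBlocks_apply₂₁] <;>
      split_ifs <;> first | ring1 | (exfalso; omega) | norm_num
  · simp [submatrix_apply, h₁, h₂, M, std_apply, fromBlocks_apply₂₂, one_apply]
    by_cases h : k = k' <;> simp [h] <;> omega


lemma prod_reindex (f : Fin d → Fin d → ℝ) :
    ∏ s : S d, f s.1.1 s.1.2 = ∏ i : Fin d, ∏ j ∈ Finset.Ioi i, f i j := by
  rw [Finset.prod_sigma']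
  exact (Finset.prod_bij
    (fun (x : Σ _ : Fin d, Fin d) (hx : x ∈ (Finset.univ.sigma fun i => Finset.Ioi i)) =>
      (⟨(x.1, x.2), by simpa using (Finset.mem_sigma.mp hx).2⟩ : S d))
    (fun _ _ => Finset.mem_univ _)
    (fun a ha b hb hab => by
      obtain ⟨a1, a2⟩ := a; obtain ⟨b1, b2⟩ := b
      simp only [Subtype.mk.injEq, Prod.mk.injEq] at hab
      simp [hab.1, hab.2])
    (fun s _ => ⟨⟨s.1.1, s.1.2⟩, by simp [Finset.mem_sigma, s.2], by simp⟩)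
    (fun a ha => rfl)).symm

end SVDJac


/-- Jacobian of the SVD. The linear map
`L : (A^U, A^V, D) ↦ A^U Σ + D + Σ A^V`, from (skew-symmetric, skew-symmetric,
diagonal) to `d×d` matrices, where bases of the skew-symmetric matrices are
`E_{pq} - E_{qp}` (`p < q`) and of the diagonal matrices `E_{kk}`, has
`|det L| = ∏_{i<j} (σ_i² - σ_j²)`. The matrix of `L` in these bases (rows
indexed by matrix entries `Fin d × Fin d`, columns by the basis index
`S ⊕ S ⊕ Fin d`, `S = {(p,q) | p < q}`) has determinant, computed after an
arbitrary identification `e` of the index types, of absolute value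
`∏_{i<j} (σ_i² - σ_j²)`. -/
theorem svd_jacobian (d : ℕ) (σ : Fin d → ℝ)
    (hpos : ∀ i, 0 < σ i) (hstrict : StrictAnti σ)
    (e : (Fin d × Fin d) ≃
      ({p : Fin d × Fin d // p.1 < p.2} ⊕ {p : Fin d × Fin d // p.1 < p.2} ⊕ Fin d)) :
    |Matrix.det (Matrix.of (fun (ij : Fin d × Fin d)
        (c : {p : Fin d × Fin d // p.1 < p.2} ⊕ {p : Fin d × Fin d // p.1 < p.2} ⊕ Fin d) =>
        match c with
        | Sum.inl p =>
            (((Matrix.single p.1.1 p.1.2 (1 : ℝ) -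
                Matrix.single p.1.2 p.1.1 1) * Matrix.diagonal σ :
                Matrix (Fin d) (Fin d) ℝ) ij.1 ij.2)
        | Sum.inr (Sum.inl p) =>
            ((Matrix.diagonal σ * (Matrix.single p.1.1 p.1.2 (1 : ℝ) -
                Matrix.single p.1.2 p.1.1 1) :
                Matrix (Fin d) (Fin d) ℝ) ij.1 ij.2)
        | Sum.inr (Sum.inr k) => (Matrix.single k k (1 : ℝ) : Matrix (Fin d) (Fin d) ℝ) ij.1 ij.2)
        |>.submatrix id e)|
      = ∏ i : Fin d, ∏ j ∈ Finset.Ioi i, (σ i ^ 2 - σ j ^ 2) := by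
  classical
  have h2 : (SVDJac.M d σ).submatrix id ⇑e
      = ((SVDJac.M d σ).submatrix (SVDJac.h₁ d) (SVDJac.h₂ d)).submatrix
          ⇑(SVDJac.h₁ d).symm ⇑(e.trans (SVDJac.h₂ d).symm) := by
    ext i c
    simp [Matrix.submatrix_apply]
  have hdet : ∀ s : SVDJac.S d, (SVDJac.B d σ s).det = σ s.1.1 ^ 2 - σ s.1.2 ^ 2 := by
    intro s
    rw [SVDJac.B, Matrix.det_fin_two_of]
    ring
  have hnn : ∀ s : SVDJac.S d, 0 ≤ σ s.1.1 ^ 2 - σ s.1.2 ^ 2 := by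
    intro s
    have h1 : σ s.1.2 < σ s.1.1 := hstrict s.2
    have h2 : σ s.1.2 ^ 2 < σ s.1.1 ^ 2 :=
      pow_lt_pow_left₀ h1 (le_of_lt (hpos _)) two_ne_zero
    linarith
  calc |((SVDJac.M d σ).submatrix id ⇑e).det|
      = |(((SVDJac.M d σ).submatrix (SVDJac.h₁ d) (SVDJac.h₂ d)).submatrix
          ⇑(SVDJac.h₁ d).symm ⇑(e.trans (SVDJac.h₂ d).symm)).det| := by rw [h2]
    _ = |((SVDJac.M d σ).submatrix (SVDJac.h₁ d) (SVDJac.h₂ d)).det| :=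
        Matrix.abs_det_submatrix_equiv_equiv _ _ _
    _ = |(Matrix.fromBlocks (Matrix.blockDiagonal (SVDJac.B d σ)) 0 0
          (1 : Matrix (Fin d) (Fin d) ℝ)).det| := by rw [SVDJac.key]
    _ = |∏ s : SVDJac.S d, (SVDJac.B d σ s).det| := by
        rw [Matrix.det_fromBlocks_zero₂₁, Matrix.det_one, mul_one,
          Matrix.det_blockDiagonal]
    _ = |∏ s : SVDJac.S d, (σ s.1.1 ^ 2 - σ s.1.2 ^ 2)| := by
        rw [Finset.prod_congr rfl fun s _ => hdet s]
    _ = ∏ s : SVDJac.S d, (σ s.1.1 ^ 2 - σ s.1.2 ^ 2) :=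
        abs_of_nonneg (Finset.prod_nonneg fun s _ => hnn s)
    _ = ∏ i : Fin d, ∏ j ∈ Finset.Ioi i, (σ i ^ 2 - σ j ^ 2) :=
        SVDJac.prod_reindex d fun i j => σ i ^ 2 - σ j ^ 2
end

section
/- For a 3×3 partial matrix with observed entries Φ_{11}, Φ_{13}, Φ_{21}, Φ_{22}, Φ_{32}, Φ_{33} (all nonzero) and unknowns w_{12}, w_{23}, w_{31}, the completion given by w_{12} = Φ_{32}Φ_{13}/Φ_{33}, w_{23} = Φ_{13}Φ_{21}/Φ_{11}, w_{31} = Φ_{33}Φ_{11}/Φ_{13} yields a matrix of rank at most 2; moreover, assuming Φ_{22}Φ_{11} ≠ Φ_{21}·(Φ_{32}Φ_{13}/Φ_{33}), no completion of this pattern has rank 1. -/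
open Matrix

lemma rank_ge_two_of_submatrix (A : Matrix (Fin 3) (Fin 3) ℝ) (r c : Fin 2 → Fin 3)
    (h : (A.submatrix r c).det ≠ 0) : 2 ≤ A.rank := by
  have hfac : A.submatrix r c =
      ((1 : Matrix (Fin 3) (Fin 3) ℝ).submatrix r id) *
        (A * ((1 : Matrix (Fin 3) (Fin 3) ℝ).submatrix id c)) := by
    ext i j
    simp [Matrix.mul_apply, Matrix.one_apply, mul_ite, ite_mul]
  have h2 : (A.submatrix r c).rank = 2 := by
    rw [Matrix.rank_of_isUnit _ ((Matrix.isUnit_iff_isUnit_det _).mpr h.isUnit)]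
    simp
  calc (2 : ℕ) = (A.submatrix r c).rank := h2.symm
    _ ≤ (A * ((1 : Matrix (Fin 3) (Fin 3) ℝ).submatrix id c)).rank := by
        rw [hfac]; exact Matrix.rank_mul_le_right _ _
    _ ≤ A.rank := Matrix.rank_mul_le_left _ _

/-- for the 3×3 completion pattern
`M(w₃₁, w₁₂, w₂₃) = [[Φ₁₁, w₁₂, Φ₁₃], [Φ₂₁, Φ₂₂, w₂₃], [w₃₁, Φ₃₂, Φ₃₃]]` with
all `Φ` entries nonzero, the completion `w₁₂ = Φ₃₂Φ₁₃/Φ₃₃`,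
`w₂₃ = Φ₁₃Φ₂₁/Φ₁₁`, `w₃₁ = Φ₃₃Φ₁₁/Φ₁₃` has rank at most 2; and under the
generic condition `Φ₂₂Φ₁₁ ≠ Φ₂₁·(Φ₃₂Φ₁₃/Φ₃₃)`, no completion has rank 1. -/
theorem three_by_three_completion
    (Φ11 Φ13 Φ21 Φ22 Φ32 Φ33 : ℝ)
    (h11 : Φ11 ≠ 0) (h13 : Φ13 ≠ 0) (h21 : Φ21 ≠ 0)
    (h22 : Φ22 ≠ 0) (h32 : Φ32 ≠ 0) (h33 : Φ33 ≠ 0)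
    (hgen : Φ22 * Φ11 ≠ Φ21 * (Φ32 * Φ13 / Φ33)) :
    (!![Φ11, Φ32 * Φ13 / Φ33, Φ13;
        Φ21, Φ22, Φ13 * Φ21 / Φ11;
        Φ33 * Φ11 / Φ13, Φ32, Φ33] : Matrix (Fin 3) (Fin 3) ℝ).rank ≤ 2
    ∧ ∀ w12 w23 w31 : ℝ,
        (!![Φ11, w12, Φ13;
            Φ21, Φ22, w23;
            w31, Φ32, Φ33] : Matrix (Fin 3) (Fin 3) ℝ).rank ≠ 1 := by
  constructor
  · have hfac : (!![Φ11, Φ32 * Φ13 / Φ33, Φ13;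
        Φ21, Φ22, Φ13 * Φ21 / Φ11;
        Φ33 * Φ11 / Φ13, Φ32, Φ33] : Matrix (Fin 3) (Fin 3) ℝ) =
        (!![(1:ℝ), 0; 0, 1; Φ33 / Φ13, 0] : Matrix (Fin 3) (Fin 2) ℝ) *
        (!![Φ11, Φ32 * Φ13 / Φ33, Φ13;
            Φ21, Φ22, Φ13 * Φ21 / Φ11] : Matrix (Fin 2) (Fin 3) ℝ) := by
      ext i j
      fin_cases i <;> fin_cases j <;>
        simp [Matrix.mul_apply, Fin.sum_univ_two] <;> field_simp <;> ring
    rw [hfac]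
    refine le_trans (Matrix.rank_mul_le_right _ _) ?_
    simpa using Matrix.rank_le_card_height
      (!![Φ11, Φ32 * Φ13 / Φ33, Φ13;
          Φ21, Φ22, Φ13 * Φ21 / Φ11] : Matrix (Fin 2) (Fin 3) ℝ)
  · intro w12 w23 w31 hr
    set A : Matrix (Fin 3) (Fin 3) ℝ := !![Φ11, w12, Φ13; Φ21, Φ22, w23; w31, Φ32, Φ33] with hA
    by_cases hm : Φ11 * Φ22 - w12 * Φ21 = 0
    · have hm2 : w12 * Φ33 - Φ13 * Φ32 ≠ 0 := by
        intro h0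
        apply hgen
        have hw : w12 = Φ32 * Φ13 / Φ33 := by field_simp; linarith
        have h1 : Φ11 * Φ22 = w12 * Φ21 := by linarith
        rw [hw] at h1
        linarith [h1]
      have h2 : 2 ≤ A.rank := by
        apply rank_ge_two_of_submatrix A ![0, 2] ![1, 2]
        have hd : (A.submatrix ![0, 2] ![1, 2]).det = w12 * Φ33 - Φ13 * Φ32 := by
          rw [Matrix.det_fin_two]; simp [hA]
        rw [hd]; exact hm2
      omega
    · have h2 : 2 ≤ A.rank := by
        apply rank_ge_two_of_submatrix A ![0, 1] ![0, 1]
        have hd : (A.submatrix ![0, 1] ![0, 1]).det = Φ11 * Φ22 - w12 * Φ21 := by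
          rw [Matrix.det_fin_two]; simp [hA]
        rw [hd]; exact hm
      omega
end
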